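/- arXiv:2406.00274 — 3 statements merged into one kernel-verified Lean document; each statement's English description precedes it below -/
import Mathlib

section
/- Let π̄, π̄' ∈ E₁, and suppose p̄* ∈ E₂ attains the supremum defining q(π̄'). Then q(π̄) ≥ q(π̄') + (r₁/2)⟨π̄ + π̄' − 2π(π̄, p̄*), π̄ − π̄'⟩. -/
open scoped RealInnerProductSpace

/-- The regularized function `χ(π,p,π̄,p̄) = f(π,p) + (r₁/2)‖π−π̄‖² − (r₂/2)‖p−p̄‖²`. -/
noncomputable def chi {E₁ E₂ : Type*} [NormedAddCommGroup E₁] [NormedAddCommGroup E₂]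
    (f : E₁ → E₂ → ℝ) (r₁ r₂ : ℝ) (π : E₁) (p : E₂) (πb : E₁) (pb : E₂) : ℝ :=
  f π p + r₁ / 2 * ‖π - πb‖ ^ 2 - r₂ / 2 * ‖p - pb‖ ^ 2

/-- if `p̄*` attains the supremum defining `q(π̄')`, then
`q(π̄) ≥ q(π̄') + (r₁/2)⟨π̄ + π̄' − 2π(π̄,p̄*), π̄ − π̄'⟩`. -/
theorem proximal_descent_of_q
    {E₁ : Type*} [NormedAddCommGroup E₁] [InnerProductSpace ℝ E₁] [FiniteDimensional ℝ E₁]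
    {E₂ : Type*} [NormedAddCommGroup E₂] [InnerProductSpace ℝ E₂] [FiniteDimensional ℝ E₂]
    (P : Set E₁) (Q : Set E₂)
    (hPne : P.Nonempty) (hPcpt : IsCompact P) (hPconv : Convex ℝ P)
    (hQne : Q.Nonempty) (hQcpt : IsCompact Q) (hQconv : Convex ℝ Q)
    (f : E₁ → E₂ → ℝ) (hf : ContDiff ℝ 1 (fun q : E₁ × E₂ => f q.1 q.2))
    (gπ : E₁ → E₂ → E₁) (gp : E₁ → E₂ → E₂)
    (hgπ : ∀ π p, HasGradientAt (fun π' => f π' p) (gπ π p) π)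
    (hgp : ∀ π p, HasGradientAt (fun p' => f π p') (gp π p) p)
    (ℓ₁ ℓ₂ : ℝ) (hℓ₁ : 0 < ℓ₁) (hℓ₂ : 0 < ℓ₂)
    (hlipπ : ∀ π ∈ P, ∀ π' ∈ P, ∀ p ∈ Q, ∀ p' ∈ Q,
      ‖gπ π p - gπ π' p'‖ ≤ ℓ₁ * (‖π - π'‖ + ‖p - p'‖))
    (hlipp : ∀ π ∈ P, ∀ π' ∈ P, ∀ p ∈ Q, ∀ p' ∈ Q,
      ‖gp π p - gp π' p'‖ ≤ ℓ₂ * (‖π - π'‖ + ‖p - p'‖))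
    (r₁ r₂ : ℝ) (hr₁ : ℓ₁ < r₁) (hr₂ : (ℓ₂ / (r₁ - ℓ₁) + 2) * ℓ₂ < r₂)
    -- `πsel2 π̄ p̄` is the unique minimizer over `Π` of `π ↦ max_{p∈𝒫} χ(π,p,π̄,p̄)`
    (πsel2 : E₁ → E₂ → E₁)
    (hπsel2 : ∀ (πb : E₁) (pb : E₂), πsel2 πb pb ∈ P ∧
      ∀ π' ∈ P, sSup ((fun p => chi f r₁ r₂ (πsel2 πb pb) p πb pb) '' Q) ≤
        sSup ((fun p => chi f r₁ r₂ π' p πb pb) '' Q))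
    -- `φpp π̄ p̄ = min_{π∈Π} max_{p∈𝒫} χ(π,p,π̄,p̄)`
    (φpp : E₁ → E₂ → ℝ)
    (hφpp : ∀ (πb : E₁) (pb : E₂),
      φpp πb pb = sSup ((fun p => chi f r₁ r₂ (πsel2 πb pb) p πb pb) '' Q)) :
    ∀ (πb πb' : E₁), BddAbove (Set.range (φpp πb)) →
      ∀ pbstar : E₂, (∀ b : E₂, φpp πb' b ≤ φpp πb' pbstar) →
      sSup (Set.range (φpp πb)) ≥
        φpp πb' pbstar +
          r₁ / 2 * ⟪πb + πb' - (2 : ℝ) • πsel2 πb pbstar, πb - πb'⟫ := by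
  intro πb πb' hbdd pbstar hmax
  set πs := πsel2 πb pbstar with hπs
  set c : ℝ := r₁ / 2 * ⟪πb + πb' - (2 : ℝ) • πs, πb - πb'⟫ with hc
  -- pointwise identity
  have hpt : ∀ p : E₂, chi f r₁ r₂ πs p πb pbstar = chi f r₁ r₂ πs p πb' pbstar + c := by
    intro p
    have hnorm : ∀ x y : E₁, ‖x‖ ^ 2 - ‖y‖ ^ 2 = ⟪x + y, x - y⟫ := by
      intro x y
      rw [← real_inner_self_eq_norm_sq, ← real_inner_self_eq_norm_sq,
        inner_add_left, inner_sub_right, inner_sub_right, real_inner_comm x y]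
      ring
    have h1 : ‖πs - πb‖ ^ 2 - ‖πs - πb'‖ ^ 2
        = ⟪(πs - πb) + (πs - πb'), (πs - πb) - (πs - πb')⟫ := hnorm _ _
    have h2 : πb + πb' - (2 : ℝ) • πs = -((πs - πb) + (πs - πb')) := by
      rw [two_smul]; abel
    have h3 : πb - πb' = -((πs - πb) - (πs - πb')) := by abel
    have h4 : ⟪πb + πb' - (2 : ℝ) • πs, πb - πb'⟫
        = ‖πs - πb‖ ^ 2 - ‖πs - πb'‖ ^ 2 := by
      rw [h2, h3, inner_neg_neg, ← h1]
    simp only [chi, hc, h4]; ring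
  -- the continuous function and its image
  have hcont : Continuous (fun p : E₂ => chi f r₁ r₂ πs p πb' pbstar) := by
    have : Continuous (fun p : E₂ => f πs p) :=
      hf.continuous.comp (continuous_const.prodMk continuous_id)
    unfold chi; fun_prop
  set A : Set ℝ := (fun p => chi f r₁ r₂ πs p πb' pbstar) '' Q with hA
  have hAne : A.Nonempty := hQne.image _
  have hAbdd : BddAbove A := (hQcpt.image hcont).bddAbove
  have himg : (fun p => chi f r₁ r₂ πs p πb pbstar) '' Q = (fun x => x + c) '' A := by
    rw [hA, Set.image_image]
    exact Set.image_congr fun p _ => hpt p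
  have hsup : sSup ((fun p => chi f r₁ r₂ πs p πb pbstar) '' Q) = sSup A + c := by
    rw [himg]
    exact ((OrderIso.addRight c).map_csSup' hAne hAbdd).symm
  -- q(πb) ≥ φpp πb pbstar
  have h5 : φpp πb pbstar ≤ sSup (Set.range (φpp πb)) :=
    le_csSup hbdd (Set.mem_range_self _)
  -- φpp πb' pbstar ≤ sSup A by minimality at (πb', pbstar)
  have h6 : φpp πb' pbstar ≤ sSup A := by
    rw [hφpp]
    exact (hπsel2 πb' pbstar).2 πs (hπsel2 πb pbstar).1
  calc sSup (Set.range (φpp πb)) ≥ φpp πb pbstar := h5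
    _ = sSup A + c := by rw [hφpp]; exact hsup
    _ ≥ φpp πb' pbstar + c := by linarith
end

section
/- There exists a constant ϖ > 0 such that for every ε ≥ 0 and every (π,p,π̄,p̄) with π ∈ Π, p ∈ 𝒫, the one-step updates π⁺ := Proj_Π(π − τ∇_πχ(π,p,π̄,p̄)), p⁺ := Proj_𝒫(p + σ∇_pχ(π⁺,p,π̄,p̄)), π̄⁺ := π̄ + β(π⁺−π̄), p̄⁺ := p̄ + μ(p⁺−p̄), and p° := Proj_𝒫(p + σ∇_pχ(π(p,π̄,p̄),p,π̄,p̄)) satisfy: if max{‖π−π⁺‖/τ, ‖p−p°‖/σ, ‖π̄−π̄⁺‖/β, ‖p̄−p̄⁺‖/μ} ≤ ε, then inf{‖∇_πf(π⁺,p⁺)+w‖ : w ∈ N_Π(π⁺)} ≤ ϖε and inf{‖−∇_pf(π⁺,p⁺)+w‖ : w ∈ N_𝒫(p⁺)} ≤ ϖε, i.e. (π⁺,p⁺) is a ϖε-game stationary point. -/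
open scoped RealInnerProductSpace

lemma proj_nonexpansive' {E : Type*} [NormedAddCommGroup E] [InnerProductSpace ℝ E]
    {K : Set E} (proj : E → E)
    (hproj : ∀ z, proj z ∈ K ∧ ∀ y ∈ K, ⟪z - proj z, y - proj z⟫ ≤ 0)
    (z z' : E) : ‖proj z - proj z'‖ ≤ ‖z - z'‖ := by
  set a := proj z with ha
  set b := proj z' with hb
  have h1 : ⟪z - a, b - a⟫ ≤ 0 := (hproj z).2 b (hproj z').1
  have h2 : ⟪z' - b, a - b⟫ ≤ 0 := (hproj z').2 a (hproj z).1
  have h1' : 0 ≤ ⟪z - a, a - b⟫ := by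
    have : ⟪z - a, a - b⟫ = -⟪z - a, b - a⟫ := by
      rw [← inner_neg_right]; congr 1; abel
    linarith [this ▸ neg_nonneg.mpr h1]
  have e : ⟪z - z', a - b⟫ = ⟪z - a, a - b⟫ - ⟪z' - b, a - b⟫ + ‖a - b‖ ^ 2 := by
    have hzz : z - z' = ((z - a) - (z' - b)) + (a - b) := by abel
    rw [hzz, inner_add_left, inner_sub_left, real_inner_self_eq_norm_sq]
  have key : ‖a - b‖ ^ 2 ≤ ⟪z - z', a - b⟫ := by linarith
  have cs : ⟪z - z', a - b⟫ ≤ ‖z - z'‖ * ‖a - b‖ := real_inner_le_norm _ _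
  rcases eq_or_lt_of_le (norm_nonneg (a - b)) with h0 | h0
  · rw [← h0]; exact norm_nonneg _
  · have : ‖a - b‖ * ‖a - b‖ ≤ ‖z - z'‖ * ‖a - b‖ := by nlinarith
    exact le_of_mul_le_mul_right this h0

lemma sel_opt' {E₁ E₂ : Type*} [NormedAddCommGroup E₁] [InnerProductSpace ℝ E₁] [CompleteSpace E₁]
    [NormedAddCommGroup E₂] [InnerProductSpace ℝ E₂]
    {P : Set E₁} (hPconv : Convex ℝ P)
    (f : E₁ → E₂ → ℝ) (r₁ r₂ : ℝ) (p : E₂) (πb : E₁) (pb : E₂)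
    {s : E₁} (g : E₁) (hg : HasGradientAt (fun π' => f π' p) g s)
    (hsP : s ∈ P) (hmin : ∀ π' ∈ P, chi f r₁ r₂ s p πb pb ≤ chi f r₁ r₂ π' p πb pb)
    {y : E₁} (hy : y ∈ P) : 0 ≤ ⟪g + r₁ • (s - πb), y - s⟫ := by
  have h1 : HasFDerivAt (fun π' => f π' p) ((InnerProductSpace.toDual ℝ E₁) g) s :=
    hg.hasFDerivAt
  have hid : HasFDerivAt (fun x : E₁ => x - πb) (ContinuousLinearMap.id ℝ E₁) s :=
    (hasFDerivAt_id s).sub_const πb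
  have h2 := (hid.inner ℝ hid).const_mul (r₁ / 2)
  have h3 := ((h1.add h2).sub_const (r₂ / 2 * ‖p - pb‖ ^ 2))
  have h3' : HasFDerivAt (fun π' => chi f r₁ r₂ π' p πb pb)
      ((InnerProductSpace.toDual ℝ E₁) g +
        (r₁ / 2) • ((fderivInnerCLM ℝ (s - πb, s - πb)).comp
          ((ContinuousLinearMap.id ℝ E₁).prod (ContinuousLinearMap.id ℝ E₁)))) s := by
    refine h3.congr_of_eventuallyEq ?_
    filter_upwards with x
    simp [chi, real_inner_self_eq_norm_sq]
  have hmin' : IsLocalMinOn (fun π' => chi f r₁ r₂ π' p πb pb) P s :=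
    (isMinOn_iff.mpr (fun x hx => hmin x hx)).localize
  have hcone : y - s ∈ posTangentConeAt P s :=
    sub_mem_posTangentConeAt_of_segment_subset (hPconv.segment_subset hsP hy)
  have := hmin'.hasFDerivWithinAt_nonneg h3'.hasFDerivWithinAt hcone
  simp only [ContinuousLinearMap.add_apply, ContinuousLinearMap.coe_smul',
    Pi.smul_apply, ContinuousLinearMap.coe_comp', Function.comp_apply,
    ContinuousLinearMap.prod_apply, ContinuousLinearMap.coe_id', id_eq,
    fderivInnerCLM_apply, InnerProductSpace.toDual_apply_apply, smul_eq_mul] at this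
  rw [inner_add_left, real_inner_smul_left]
  rw [real_inner_comm (s - πb) (y - s)] at this
  linarith

/-- small one-step residuals imply an approximate game stationary point. -/
theorem small_residuals_imply_game_stationarity
    {E₁ : Type*} [NormedAddCommGroup E₁] [InnerProductSpace ℝ E₁] [FiniteDimensional ℝ E₁]
    {E₂ : Type*} [NormedAddCommGroup E₂] [InnerProductSpace ℝ E₂] [FiniteDimensional ℝ E₂]
    (P : Set E₁) (Q : Set E₂)
    (hPne : P.Nonempty) (hPcpt : IsCompact P) (hPconv : Convex ℝ P)
    (hQne : Q.Nonempty) (hQcpt : IsCompact Q) (hQconv : Convex ℝ Q)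
    (f : E₁ → E₂ → ℝ) (hf : ContDiff ℝ 1 (fun q : E₁ × E₂ => f q.1 q.2))
    (gπ : E₁ → E₂ → E₁) (gp : E₁ → E₂ → E₂)
    (hgπ : ∀ π p, HasGradientAt (fun π' => f π' p) (gπ π p) π)
    (hgp : ∀ π p, HasGradientAt (fun p' => f π p') (gp π p) p)
    (ℓ₁ ℓ₂ : ℝ) (hℓ₁ : 0 < ℓ₁) (hℓ₂ : 0 < ℓ₂)
    (hlipπ : ∀ π ∈ P, ∀ π' ∈ P, ∀ p ∈ Q, ∀ p' ∈ Q,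
      ‖gπ π p - gπ π' p'‖ ≤ ℓ₁ * (‖π - π'‖ + ‖p - p'‖))
    (hlipp : ∀ π ∈ P, ∀ π' ∈ P, ∀ p ∈ Q, ∀ p' ∈ Q,
      ‖gp π p - gp π' p'‖ ≤ ℓ₂ * (‖π - π'‖ + ‖p - p'‖))
    (r₁ r₂ : ℝ) (hr₁ : ℓ₁ < r₁) (hr₂ : (ℓ₂ / (r₁ - ℓ₁) + 2) * ℓ₂ < r₂)
    (τ σ β μ : ℝ) (hτ : 0 < τ) (hσ : 0 < σ)
    (hβ : 0 < β) (hβ1 : β < 1) (hμ : 0 < μ) (hμ1 : μ < 1)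
    -- metric projections onto `Π` and `𝒫`
    (projP : E₁ → E₁)
    (hprojP : ∀ z : E₁, projP z ∈ P ∧ ∀ y ∈ P, ⟪z - projP z, y - projP z⟫ ≤ 0)
    (projQ : E₂ → E₂)
    (hprojQ : ∀ z : E₂, projQ z ∈ Q ∧ ∀ y ∈ Q, ⟪z - projQ z, y - projQ z⟫ ≤ 0)
    -- `πsel p π̄ p̄` is the unique minimizer of `π' ↦ χ(π',p,π̄,p̄)` over `Π`
    (πsel : E₂ → E₁ → E₂ → E₁)
    (hπsel : ∀ (p : E₂) (πb : E₁) (pb : E₂), πsel p πb pb ∈ P ∧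
      ∀ π' ∈ P, chi f r₁ r₂ (πsel p πb pb) p πb pb ≤ chi f r₁ r₂ π' p πb pb) :
    ∃ ϖ : ℝ, 0 < ϖ ∧
      ∀ ε : ℝ, 0 ≤ ε → ∀ π ∈ P, ∀ p ∈ Q,
        ∀ (πb : E₁) (pb : E₂) (πp : E₁) (pp : E₂) (πbp : E₁) (pbp p0 : E₂),
        πp = projP (π - τ • (gπ π p + r₁ • (π - πb))) →
        pp = projQ (p + σ • (gp πp p - r₂ • (p - pb))) →
        πbp = πb + β • (πp - πb) →
        pbp = pb + μ • (pp - pb) →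
        p0 = projQ (p + σ • (gp (πsel p πb pb) p - r₂ • (p - pb))) →
        ‖π - πp‖ / τ ≤ ε → ‖p - p0‖ / σ ≤ ε →
        ‖πb - πbp‖ / β ≤ ε → ‖pb - pbp‖ / μ ≤ ε →
        sInf ((fun w => ‖gπ πp pp + w‖) '' {w : E₁ | ∀ y ∈ P, ⟪w, y - πp⟫ ≤ 0}) ≤ ϖ * ε ∧
        sInf ((fun w => ‖-gp πp pp + w‖) '' {w : E₂ | ∀ y ∈ Q, ⟪w, y - pp⟫ ≤ 0}) ≤ ϖ * ε := by
  have hrl : (0:ℝ) < r₁ - ℓ₁ := by linarith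
  have hτ' : (0:ℝ) < 1/τ := by positivity
  have hr₁pos : (0:ℝ) < r₁ := lt_trans hℓ₁ hr₁
  have hr₂pos : (0:ℝ) < r₂ := by
    have h1 : (0:ℝ) < ℓ₂ / (r₁ - ℓ₁) + 2 := by positivity
    nlinarith
  have hc : (0:ℝ) < (ℓ₁ + r₁ + 1/τ) / (r₁ - ℓ₁) := div_pos (by linarith) hrl
  set c : ℝ := (ℓ₁ + r₁ + 1/τ) / (r₁ - ℓ₁) with hcdef
  have hA : (0:ℝ) < σ + σ * ℓ₂ * c * τ := by positivity
  set A : ℝ := σ + σ * ℓ₂ * c * τ with hAdef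
  set W₁ : ℝ := ℓ₁ * (τ + A) + r₁ * (τ + 1) + 1 with hW1def
  set W₂ : ℝ := ℓ₂ * A + r₂ * (A + 1) + A / σ with hW2def
  have hW₁ : (0:ℝ) < W₁ := by positivity
  clear_value c A W₁ W₂
  refine ⟨max W₁ W₂, lt_max_of_lt_left hW₁, ?_⟩
  intro ε hε π hπ p hp πb pb πp pp πbp pbp p0 hπp hpp hπbp hpbp hp0 hε1 hε2 hε3 hε4
  set s : E₁ := πsel p πb pb with hsdef
  have hπpP : πp ∈ P := hπp ▸ (hprojP _).1
  have hppQ : pp ∈ Q := hpp ▸ (hprojQ _).1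
  have hsP : s ∈ P := (hπsel p πb pb).1
  have hsmin : ∀ π' ∈ P, chi f r₁ r₂ s p πb pb ≤ chi f r₁ r₂ π' p πb pb := by
    rw [hsdef]; exact (hπsel p πb pb).2
  clear_value s
  -- basic residual bounds
  have e1 : ‖π - πp‖ ≤ τ * ε := by rw [div_le_iff₀ hτ] at hε1; linarith
  have e2 : ‖p - p0‖ ≤ σ * ε := by rw [div_le_iff₀ hσ] at hε2; linarith
  have e3 : ‖πp - πb‖ ≤ ε := by
    have h : ‖πb - πbp‖ = β * ‖πp - πb‖ := by
      rw [hπbp, show πb - (πb + β • (πp - πb)) = -(β • (πp - πb)) by abel,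
        norm_neg, norm_smul, Real.norm_eq_abs, abs_of_pos hβ]
    rw [h, mul_div_cancel_left₀ _ hβ.ne'] at hε3
    exact hε3
  have e4 : ‖pp - pb‖ ≤ ε := by
    have h : ‖pb - pbp‖ = μ * ‖pp - pb‖ := by
      rw [hpbp, show pb - (pb + μ • (pp - pb)) = -(μ • (pp - pb)) by abel,
        norm_neg, norm_smul, Real.norm_eq_abs, abs_of_pos hμ]
    rw [h, mul_div_cancel_left₀ _ hμ.ne'] at hε4
    exact hε4
  -- normal cone element for πp
  set G₀ : E₁ := gπ π p + r₁ • (π - πb) with hG₀def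
  set w₁ : E₁ := (1/τ) • (π - πp) - G₀ with hw₁def
  have hτw : τ • w₁ = π - τ • G₀ - πp := by
    rw [hw₁def, smul_sub, smul_smul, mul_one_div, div_self hτ.ne', one_smul]
    abel
  have hw₁ : ∀ y ∈ P, ⟪w₁, y - πp⟫ ≤ 0 := by
    intro y hy
    have h := (hprojP (π - τ • G₀)).2 y hy
    rw [← hπp, ← hτw, real_inner_smul_left] at h
    exact le_of_not_gt fun hx => absurd h (not_le.mpr (mul_pos hτ hx))
  clear_value w₁ G₀
  -- normal cone element for pp
  set Gp : E₂ := gp πp p - r₂ • (p - pb) with hGpdef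
  set w₂ : E₂ := (1/σ) • (p - pp) + Gp with hw₂def
  have hσw : σ • w₂ = p + σ • Gp - pp := by
    rw [hw₂def, smul_add, smul_smul, mul_one_div, div_self hσ.ne', one_smul]
    abel
  have hw₂ : ∀ y ∈ Q, ⟪w₂, y - pp⟫ ≤ 0 := by
    intro y hy
    have h := (hprojQ (p + σ • Gp)).2 y hy
    rw [← hpp, ← hσw, real_inner_smul_left] at h
    exact le_of_not_gt fun hx => absurd h (not_le.mpr (mul_pos hσ hx))
  clear_value w₂ Gp
  -- first-order optimality of s
  have hopt : ∀ y ∈ P, 0 ≤ ⟪gπ s p + r₁ • (s - πb), y - s⟫ := fun y hy =>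
    sel_opt' hPconv f r₁ r₂ p πb pb (gπ s p) (hgπ s p) hsP hsmin hy
  -- bound ‖πp - s‖ ≤ c * ‖π - πp‖
  have hsq : ‖πp - s‖ ^ 2 = ‖πp - s‖ * ‖πp - s‖ := by ring
  have lip1 : ‖gπ πp p - gπ s p‖ ≤ ℓ₁ * ‖πp - s‖ := by
    have h := hlipπ πp hπpP s hsP p hp p hp
    simpa using h
  have mono : (r₁ - ℓ₁) * ‖πp - s‖ ^ 2 ≤ ⟪gπ πp p + r₁ • (πp - πb), πp - s⟫ := by
    have hGs := hopt πp hπpP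
    have hsplit : gπ πp p + r₁ • (πp - πb)
        = (gπ πp p - gπ s p) + (gπ s p + r₁ • (s - πb)) + r₁ • (πp - s) := by module
    rw [hsplit, inner_add_left, inner_add_left, real_inner_smul_left,
      real_inner_self_eq_norm_sq]
    have hX : -(ℓ₁ * ‖πp - s‖ ^ 2) ≤ ⟪gπ πp p - gπ s p, πp - s⟫ := by
      have h1 := abs_real_inner_le_norm (gπ πp p - gπ s p) (πp - s)
      have h2 : ‖gπ πp p - gπ s p‖ * ‖πp - s‖ ≤ ℓ₁ * ‖πp - s‖ ^ 2 :=
        (mul_le_mul_of_nonneg_right lip1 (norm_nonneg _)).trans_eq (by ring)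
      have h3 := neg_abs_le ⟪gπ πp p - gπ s p, πp - s⟫
      linarith
    linarith
  have hVIs := hw₁ s hsP
  have hflip : 0 ≤ ⟪w₁, πp - s⟫ := by
    rw [show πp - s = -(s - πp) by abel, inner_neg_right]; linarith
  rw [hw₁def, inner_sub_left, real_inner_smul_left] at hflip
  have hcs1 : ⟪π - πp, πp - s⟫ ≤ ‖π - πp‖ * ‖πp - s‖ := real_inner_le_norm _ _
  -- ⟪G₀, πp - s⟫ ≤ (1/τ) * (‖π - πp‖ * ‖πp - s‖)
  have hG₀bd : ⟪G₀, πp - s⟫ ≤ (1/τ) * (‖π - πp‖ * ‖πp - s‖) := by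
    have h6 := mul_le_mul_of_nonneg_left hcs1 hτ'.le
    linarith
  have lip2 : ‖gπ πp p - gπ π p‖ ≤ ℓ₁ * ‖πp - π‖ := by
    have h := hlipπ πp hπpP π hπ p hp p hp
    simpa using h
  have hdiffbd : ⟪gπ πp p + r₁ • (πp - πb) - G₀, πp - s⟫
      ≤ (ℓ₁ + r₁) * ‖π - πp‖ * ‖πp - s‖ := by
    have hsplit2 : gπ πp p + r₁ • (πp - πb) - G₀
        = (gπ πp p - gπ π p) + r₁ • (πp - π) := by rw [hG₀def]; module
    have hn : ‖gπ πp p + r₁ • (πp - πb) - G₀‖ ≤ (ℓ₁ + r₁) * ‖π - πp‖ := by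
      rw [hsplit2]
      refine (norm_add_le _ _).trans ?_
      rw [norm_smul, Real.norm_eq_abs, abs_of_pos hr₁pos, norm_sub_rev πp π]
      linarith [lip2, norm_sub_rev πp π ▸ lip2]
    calc ⟪gπ πp p + r₁ • (πp - πb) - G₀, πp - s⟫
        ≤ ‖gπ πp p + r₁ • (πp - πb) - G₀‖ * ‖πp - s‖ := real_inner_le_norm _ _
      _ ≤ (ℓ₁ + r₁) * ‖π - πp‖ * ‖πp - s‖ :=
          mul_le_mul_of_nonneg_right hn (norm_nonneg _)
  have hd : ‖πp - s‖ ≤ c * ‖π - πp‖ := by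
    rw [inner_sub_left] at hdiffbd
    have final : (r₁ - ℓ₁) * ‖πp - s‖ ^ 2
        ≤ (ℓ₁ + r₁ + 1/τ) * ‖π - πp‖ * ‖πp - s‖ := by linarith
    rcases eq_or_lt_of_le (norm_nonneg (πp - s)) with h0 | h0
    · rw [← h0]; positivity
    · rw [hcdef, div_mul_eq_mul_div, le_div_iff₀ hrl]
      have final' : (‖πp - s‖ * (r₁ - ℓ₁)) * ‖πp - s‖
          ≤ ((ℓ₁ + r₁ + 1/τ) * ‖π - πp‖) * ‖πp - s‖ := by
        calc (‖πp - s‖ * (r₁ - ℓ₁)) * ‖πp - s‖ = (r₁ - ℓ₁) * ‖πp - s‖ ^ 2 := by ring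
          _ ≤ (ℓ₁ + r₁ + 1/τ) * ‖π - πp‖ * ‖πp - s‖ := final
          _ = ((ℓ₁ + r₁ + 1/τ) * ‖π - πp‖) * ‖πp - s‖ := by ring
      exact le_of_mul_le_mul_right final' h0
  -- ‖p - pp‖ ≤ A * ε
  have lipp1 : ‖gp πp p - gp s p‖ ≤ ℓ₂ * ‖πp - s‖ := by
    have h := hlipp πp hπpP s hsP p hp p hp
    simpa using h
  have hpp0 : ‖pp - p0‖ ≤ σ * (ℓ₂ * (c * (τ * ε))) := by
    have hne := proj_nonexpansive' projQ hprojQ (p + σ • Gp)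
      (p + σ • (gp s p - r₂ • (p - pb)))
    rw [← hpp, ← hp0] at hne
    have harg : (p + σ • Gp) - (p + σ • (gp s p - r₂ • (p - pb)))
        = σ • (gp πp p - gp s p) := by rw [hGpdef]; module
    rw [harg, norm_smul, Real.norm_eq_abs, abs_of_pos hσ] at hne
    have h5 : ‖gp πp p - gp s p‖ ≤ ℓ₂ * (c * (τ * ε)) := by
      refine lipp1.trans ?_
      have : ‖πp - s‖ ≤ c * (τ * ε) :=
        hd.trans (mul_le_mul_of_nonneg_left e1 hc.le)
      exact mul_le_mul_of_nonneg_left this hℓ₂.le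
    exact hne.trans (mul_le_mul_of_nonneg_left h5 hσ.le)
  have hppb : ‖p - pp‖ ≤ A * ε := by
    have htri : ‖p - pp‖ ≤ ‖p - p0‖ + ‖pp - p0‖ := by
      rw [norm_sub_rev pp p0]
      calc ‖p - pp‖ = ‖(p - p0) + (p0 - pp)‖ := by rw [show (p - p0) + (p0 - pp) = p - pp by abel]
        _ ≤ ‖p - p0‖ + ‖p0 - pp‖ := norm_add_le _ _
    calc ‖p - pp‖ ≤ σ * ε + σ * (ℓ₂ * (c * (τ * ε))) := by linarith
      _ = A * ε := by rw [hAdef]; ring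
  -- first infimum bound
  have hsum1 : gπ πp pp + w₁
      = (gπ πp pp - gπ π p) + (-(r₁ • (π - πb))) + (1/τ) • (π - πp) := by
    rw [hw₁def, hG₀def]; module
  have hb1 : ‖gπ πp pp + w₁‖ ≤ W₁ * ε := by
    rw [hsum1]
    refine (norm_add₃_le).trans ?_
    have t1 : ‖gπ πp pp - gπ π p‖ ≤ ℓ₁ * (τ * ε + A * ε) := by
      have h := hlipπ πp hπpP π hπ pp hppQ p hp
      rw [norm_sub_rev πp π, norm_sub_rev pp p] at h
      exact h.trans (mul_le_mul_of_nonneg_left (by linarith) hℓ₁.le)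
    have t2 : ‖-(r₁ • (π - πb))‖ ≤ r₁ * (τ * ε + ε) := by
      rw [norm_neg, norm_smul, Real.norm_eq_abs, abs_of_pos hr₁pos]
      have htri : ‖π - πb‖ ≤ ‖π - πp‖ + ‖πp - πb‖ := by
        calc ‖π - πb‖ = ‖(π - πp) + (πp - πb)‖ := by rw [show (π - πp) + (πp - πb) = π - πb by abel]
          _ ≤ ‖π - πp‖ + ‖πp - πb‖ := norm_add_le _ _
      exact mul_le_mul_of_nonneg_left (by linarith) hr₁pos.le
    have t3 : ‖(1/τ) • (π - πp)‖ ≤ ε := by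
      rw [norm_smul, Real.norm_eq_abs, abs_of_pos hτ']
      calc (1/τ) * ‖π - πp‖ ≤ (1/τ) * (τ * ε) := mul_le_mul_of_nonneg_left e1 hτ'.le
        _ = ε := by field_simp
    calc ‖gπ πp pp - gπ π p‖ + ‖-(r₁ • (π - πb))‖ + ‖(1/τ) • (π - πp)‖
        ≤ ℓ₁ * (τ * ε + A * ε) + r₁ * (τ * ε + ε) + ε := by linarith
      _ = W₁ * ε := by rw [hW1def]; ring
  -- second infimum bound
  have hsum2 : -gp πp pp + w₂
      = (gp πp p - gp πp pp) + (-(r₂ • (p - pb))) + (1/σ) • (p - pp) := by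
    rw [hw₂def, hGpdef]; module
  have hb2 : ‖-gp πp pp + w₂‖ ≤ W₂ * ε := by
    rw [hsum2]
    refine (norm_add₃_le).trans ?_
    have t1 : ‖gp πp p - gp πp pp‖ ≤ ℓ₂ * (A * ε) := by
      have h := hlipp πp hπpP πp hπpP p hp pp hppQ
      simp only [sub_self, norm_zero, zero_add] at h
      exact h.trans (mul_le_mul_of_nonneg_left hppb hℓ₂.le)
    have t2 : ‖-(r₂ • (p - pb))‖ ≤ r₂ * (A * ε + ε) := by
      rw [norm_neg, norm_smul, Real.norm_eq_abs, abs_of_pos hr₂pos]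
      have htri : ‖p - pb‖ ≤ ‖p - pp‖ + ‖pp - pb‖ := by
        calc ‖p - pb‖ = ‖(p - pp) + (pp - pb)‖ := by rw [show (p - pp) + (pp - pb) = p - pb by abel]
          _ ≤ ‖p - pp‖ + ‖pp - pb‖ := norm_add_le _ _
      exact mul_le_mul_of_nonneg_left (by linarith) hr₂pos.le
    have t3 : ‖(1/σ) • (p - pp)‖ ≤ (A / σ) * ε := by
      rw [norm_smul, Real.norm_eq_abs, abs_of_pos (by positivity : (0:ℝ) < 1/σ)]
      calc (1/σ) * ‖p - pp‖ ≤ (1/σ) * (A * ε) :=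
            mul_le_mul_of_nonneg_left hppb (by positivity)
        _ = (A / σ) * ε := by field_simp
    calc ‖gp πp p - gp πp pp‖ + ‖-(r₂ • (p - pb))‖ + ‖(1/σ) • (p - pp)‖
        ≤ ℓ₂ * (A * ε) + r₂ * (A * ε + ε) + (A / σ) * ε := by linarith
      _ = W₂ * ε := by rw [hW2def]; ring
  constructor
  · have hbdd : BddBelow ((fun w => ‖gπ πp pp + w‖) '' {w : E₁ | ∀ y ∈ P, ⟪w, y - πp⟫ ≤ 0}) := by
      refine ⟨0, ?_⟩
      rintro x ⟨w, -, rfl⟩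
      exact norm_nonneg _
    have hmem : ‖gπ πp pp + w₁‖ ∈
        ((fun w => ‖gπ πp pp + w‖) '' {w : E₁ | ∀ y ∈ P, ⟪w, y - πp⟫ ≤ 0}) := ⟨w₁, hw₁, rfl⟩
    exact (csInf_le hbdd hmem).trans
      (hb1.trans (mul_le_mul_of_nonneg_right (le_max_left _ _) hε))
  · have hbdd : BddBelow ((fun w => ‖-gp πp pp + w‖) '' {w : E₂ | ∀ y ∈ Q, ⟪w, y - pp⟫ ≤ 0}) := by
      refine ⟨0, ?_⟩
      rintro x ⟨w, -, rfl⟩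
      exact norm_nonneg _
    have hmem : ‖-gp πp pp + w₂‖ ∈
        ((fun w => ‖-gp πp pp + w‖) '' {w : E₂ | ∀ y ∈ Q, ⟪w, y - pp⟫ ≤ 0}) := ⟨w₂, hw₂, rfl⟩
    exact (csInf_le hbdd hmem).trans
      (hb2.trans (mul_le_mul_of_nonneg_right (le_max_right _ _) hε))
end

section
/- For all ζ > 0, δ > 0 and every π ∈ Π with φ_{2ℓ}(π) − φ* ≥ ζ and φ(π) − φ* ≤ δ, one has dist(π, Π*_ℓ(ζ)) ≤ C·log(δ/ζ). -/
open scoped RealInnerProductSpace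

set_option maxHeartbeats 1000000

/-- for all `ζ > 0`, `δ > 0` and every `π ∈ Π` with `φ_{2ℓ}(π) − φ* ≥ ζ` and
`φ(π) − φ* ≤ δ`, one has `dist(π, Π*_ℓ(ζ)) ≤ C·log(δ/ζ)`. -/
theorem dist_to_near_optimal_set_le_log
    {E : Type*} [NormedAddCommGroup E] [InnerProductSpace ℝ E] [FiniteDimensional ℝ E]
    (Pi : Set E) (hPine : Pi.Nonempty) (hPicpt : IsCompact Pi) (hPiconv : Convex ℝ Pi)
    (ℓ : ℝ) (hℓ : 0 < ℓ)
    (φ : E → ℝ) (hφc : Continuous φ)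
    (hφwc : ConvexOn ℝ Pi (fun π => φ π + ℓ / 2 * ‖π‖ ^ 2))
    -- Moreau envelope `env = φ_{2ℓ}` and proximal point `pt = π̃`
    (env : E → ℝ) (pt : E → E)
    (hpt : ∀ π : E, pt π ∈ Pi ∧
      (∀ z ∈ Pi, φ (pt π) + ℓ * ‖π - pt π‖ ^ 2 ≤ φ z + ℓ * ‖π - z‖ ^ 2) ∧
      env π = φ (pt π) + ℓ * ‖π - pt π‖ ^ 2)
    (φstar : ℝ) (πmin : E) (hπmin : πmin ∈ Pi)
    (hπminle : ∀ π ∈ Pi, φ πmin ≤ φ π) (hφstar : φstar = φ πmin)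
    -- gradient-dominance-like property
    (C : ℝ) (hC : 0 < C)
    (hgd : ∀ π ∈ Pi, φ π - φstar ≤ 2 * ℓ * C * ‖π - pt π‖) :
    ∀ ζ δ : ℝ, 0 < ζ → 0 < δ → ∀ π ∈ Pi, ζ ≤ env π - φstar → φ π - φstar ≤ δ →
      Metric.infDist π {π' ∈ Pi | env π' - φstar < ζ} ≤ C * Real.log (δ / ζ) := by
  intro ζ δ hζ hδ π hπ henv hφδ
  have hstar : ∀ x ∈ Pi, φstar ≤ φ x := by
    intro x hx; rw [hφstar]; exact hπminle x hx
  have envle : ∀ x ∈ Pi, env x ≤ φ x := by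
    intro x hx
    have h := (hpt x).2.1 x hx
    rw [(hpt x).2.2]
    simpa using h
  have envge : ∀ x, φstar ≤ env x := by
    intro x
    rw [(hpt x).2.2]
    have h1 := hstar (pt x) (hpt x).1
    have h2 : 0 ≤ ℓ * ‖x - pt x‖ ^ 2 := by positivity
    linarith
  have hδζ : ζ ≤ δ := by
    have h1 := envle π hπ
    linarith
  have hlog : 0 ≤ Real.log (δ / ζ) := Real.log_nonneg ((one_le_div hζ).2 hδζ)
  -- envelope gap dominated by prox step
  have hgap : ∀ x ∈ Pi, env x - φstar ≤ 2 * ℓ * C * ‖x - pt x‖ := by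
    intro x hx
    have h1 := envle x hx
    have h2 := hgd x hx
    linarith
  -- uniform bound on prox step lengths
  have hdbound : ∀ x ∈ Pi, ‖x - pt x‖ ≤ 2 * C := by
    intro x hx
    have h1 := (hpt x).2.1 x hx
    simp only [sub_self, norm_zero] at h1
    have h2 := hgd x hx
    have h3 := hstar (pt x) (hpt x).1
    have hd : 0 ≤ ‖x - pt x‖ := norm_nonneg _
    rcases eq_or_lt_of_le hd with h0 | h0
    · rw [← h0]; positivity
    · have key : ℓ * ‖x - pt x‖ ^ 2 ≤ 2 * ℓ * C * ‖x - pt x‖ := by nlinarith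
      nlinarith [key, mul_pos hℓ h0]
  apply le_of_forall_pos_le_add
  intro ε hε
  obtain ⟨t, ht0, ht1, htDε⟩ :
      ∃ t : ℝ, 0 < t ∧ t ≤ 1 ∧ t * (C * Real.log (δ / ζ) + 2 * C) ≤ ε := by
    have hD0 : 0 ≤ C * Real.log (δ / ζ) + 2 * C := by
      have := mul_nonneg hC.le hlog
      linarith
    refine ⟨min 1 (ε / (C * Real.log (δ / ζ) + 2 * C + 1)), lt_min one_pos
      (div_pos hε (by linarith)), min_le_left _ _, ?_⟩
    calc min 1 (ε / (C * Real.log (δ / ζ) + 2 * C + 1)) * (C * Real.log (δ / ζ) + 2 * C)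
        ≤ (ε / (C * Real.log (δ / ζ) + 2 * C + 1)) * (C * Real.log (δ / ζ) + 2 * C) :=
          mul_le_mul_of_nonneg_right (min_le_right _ _) hD0
      _ ≤ ε := by
          rw [div_mul_eq_mul_div, div_le_iff₀ (by linarith)]
          nlinarith
  set step : E → E := fun y => y + t • (pt y - y) with hstep
  set f : ℕ → E := fun n => step^[n] π with hf
  have hf0 : f 0 = π := rfl
  have hfs : ∀ n, f (n + 1) = step (f n) := fun n => Function.iterate_succ_apply' step n π
  have hstepeq : ∀ y : E, step y = (1 - t) • y + t • pt y := by
    intro y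
    rw [hstep]
    simp only [smul_sub, sub_smul, one_smul]
    abel
  have hmem : ∀ n, f n ∈ Pi := by
    intro n
    induction n with
    | zero => exact hπ
    | succ n ih =>
      rw [hfs, hstepeq]
      exact hPiconv ih (hpt (f n)).1 (by linarith) ht0.le (by ring)
  have hlen : ∀ n, ‖f n - f (n + 1)‖ = t * ‖f n - pt (f n)‖ := by
    intro n
    rw [hfs]
    have h : f n - step (f n) = t • (f n - pt (f n)) := by
      rw [hstep]
      simp only [smul_sub]
      abel
    rw [h, norm_smul, Real.norm_eq_abs, abs_of_pos ht0]
  have hdecr : ∀ n, env (f (n + 1)) ≤ env (f n) - ℓ * (t * (2 - t)) * ‖f n - pt (f n)‖ ^ 2 := by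
    intro n
    have hx : f n ∈ Pi := hmem n
    have hkey : env (f (n + 1)) ≤ φ (pt (f n)) + ℓ * ‖f (n + 1) - pt (f n)‖ ^ 2 := by
      rw [(hpt (f (n + 1))).2.2]
      exact (hpt (f (n + 1))).2.1 (pt (f n)) (hpt (f n)).1
    have hdist : ‖f (n + 1) - pt (f n)‖ = (1 - t) * ‖f n - pt (f n)‖ := by
      rw [hfs]
      have h : step (f n) - pt (f n) = (1 - t) • (f n - pt (f n)) := by
        rw [hstep]
        simp only [smul_sub, sub_smul, one_smul]
        abel
      rw [h, norm_smul, Real.norm_eq_abs, abs_of_nonneg (by linarith)]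
    rw [hdist] at hkey
    have henvx : env (f n) = φ (pt (f n)) + ℓ * ‖f n - pt (f n)‖ ^ 2 := (hpt (f n)).2.2
    nlinarith [hkey]
  have htt : 0 < t * (2 - t) := by nlinarith
  -- termination
  have hterm : ∃ n, env (f n) - φstar < ζ := by
    by_contra hcon
    push_neg at hcon
    set c : ℝ := ℓ * (t * (2 - t)) * (ζ / (2 * ℓ * C)) ^ 2 with hc
    have hc0 : 0 < c := by positivity
    have hstep' : ∀ n, env (f (n + 1)) ≤ env (f n) - c := by
      intro n
      have hd := hgap (f n) (hmem n)
      have h1 := hcon n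
      have hdge : ζ / (2 * ℓ * C) ≤ ‖f n - pt (f n)‖ := by
        rw [div_le_iff₀ (by positivity)]
        nlinarith
      have h2 := hdecr n
      have h3 : ℓ * (t * (2 - t)) * (ζ / (2 * ℓ * C)) ^ 2 ≤
          ℓ * (t * (2 - t)) * ‖f n - pt (f n)‖ ^ 2 := by
        have h4 : (ζ / (2 * ℓ * C)) ^ 2 ≤ ‖f n - pt (f n)‖ ^ 2 :=
          pow_le_pow_left₀ (by positivity) hdge 2
        exact mul_le_mul_of_nonneg_left h4 (by positivity)
      rw [hc]
      linarith
    have hsum : ∀ n : ℕ, env (f n) ≤ env π - n * c := by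
      intro n
      induction n with
      | zero => simp [hf0]
      | succ n ih =>
        have := hstep' n
        push_cast
        linarith
    obtain ⟨n, hn⟩ := exists_nat_gt ((env π - φstar) / c)
    have h5 := hsum n
    have h6 := envge (f n)
    rw [div_lt_iff₀ hc0] at hn
    linarith
  set N := Nat.find hterm with hNdef
  have hNspec : env (f N) - φstar < ζ := Nat.find_spec hterm
  have hNmin : ∀ k, k < N → ζ ≤ env (f k) - φstar := fun k hk =>
    not_lt.mp (Nat.find_min hterm hk)
  have hN1 : 1 ≤ N := by
    rcases Nat.eq_zero_or_pos N with h | h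
    · exfalso
      rw [h, hf0] at hNspec
      linarith
    · exact h
  obtain ⟨M, hM⟩ : ∃ M, N = M + 1 := ⟨N - 1, by omega⟩
  -- per-step log bound
  have hkey : ∀ k, k < M → ‖f k - f (k + 1)‖ ≤
      C * (1 + t) * (Real.log (env (f k) - φstar) - Real.log (env (f (k + 1)) - φstar)) := by
    intro k hk
    set a : ℝ := env (f k) - φstar with ha'
    set b : ℝ := env (f (k + 1)) - φstar with hb'
    have ha : ζ ≤ a := hNmin k (by omega)
    have hb : ζ ≤ b := hNmin (k + 1) (by omega)
    have ha0 : 0 < a := lt_of_lt_of_le hζ ha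
    have hb0 : 0 < b := lt_of_lt_of_le hζ hb
    have hd := hgap (f k) (hmem k)
    have hdec := hdecr k
    set d : ℝ := ‖f k - pt (f k)‖ with hd'
    have hd0 : 0 ≤ d := norm_nonneg _
    have hlog1 : (a - b) / a ≤ Real.log a - Real.log b := by
      have h := Real.log_le_sub_one_of_pos (show (0:ℝ) < b / a by positivity)
      rw [Real.log_div (ne_of_gt hb0) (ne_of_gt ha0)] at h
      have h2 : (a - b) / a = 1 - b / a := by field_simp
      linarith
    rw [hlen k]
    have hchain : t * d * a ≤ C * (1 + t) * (a - b) := by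
      have h1 : t * d * a ≤ t * d * (2 * ℓ * C * d) :=
        mul_le_mul_of_nonneg_left hd (by positivity)
      have h2 : C * (1 + t) * (ℓ * (t * (2 - t)) * d ^ 2) ≤ C * (1 + t) * (a - b) :=
        mul_le_mul_of_nonneg_left (by linarith) (by positivity)
      have h3 : t * d * (2 * ℓ * C * d) ≤ C * (1 + t) * (ℓ * (t * (2 - t)) * d ^ 2) := by
        have hid : C * (1 + t) * (ℓ * (t * (2 - t)) * d ^ 2) - t * d * (2 * ℓ * C * d)
            = C * ℓ * (t * t) * (1 - t) * d ^ 2 := by ring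
        have hpos : 0 ≤ C * ℓ * (t * t) * (1 - t) * d ^ 2 :=
          mul_nonneg (mul_nonneg (mul_nonneg (mul_nonneg hC.le hℓ.le)
            (mul_nonneg ht0.le ht0.le)) (by linarith)) (sq_nonneg d)
        linarith
      linarith
    have hfrac : t * d ≤ C * (1 + t) * ((a - b) / a) := by
      rw [← mul_div_assoc, le_div_iff₀ ha0]
      exact hchain
    calc t * d ≤ C * (1 + t) * ((a - b) / a) := hfrac
      _ ≤ C * (1 + t) * (Real.log a - Real.log b) :=
        mul_le_mul_of_nonneg_left hlog1 (by positivity)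
  -- total length bound
  have h1 : dist (f 0) (f N) ≤ ∑ i ∈ Finset.range N, dist (f i) (f (i + 1)) :=
    dist_le_range_sum_dist f N
  rw [hM, Finset.sum_range_succ] at h1
  have h2 : ∑ i ∈ Finset.range M, dist (f i) (f (i + 1)) ≤
      ∑ i ∈ Finset.range M, (C * (1 + t) * Real.log (env (f i) - φstar)
        - C * (1 + t) * Real.log (env (f (i + 1)) - φstar)) := by
    apply Finset.sum_le_sum
    intro i hi
    rw [dist_eq_norm]
    have := hkey i (Finset.mem_range.mp hi)
    linarith [this]
  rw [Finset.sum_range_sub' (fun i => C * (1 + t) * Real.log (env (f i) - φstar)) M] at h2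
  have hlast : dist (f M) (f (M + 1)) ≤ t * (2 * C) := by
    rw [dist_eq_norm, hlen M]
    exact mul_le_mul_of_nonneg_left (hdbound (f M) (hmem M)) ht0.le
  -- bound the log difference
  have hgap0pos : 0 < env (f 0) - φstar := by rw [hf0]; linarith
  have hgapMpos : ζ ≤ env (f M) - φstar := hNmin M (by omega)
  have hlogdiff : Real.log (env (f 0) - φstar) - Real.log (env (f M) - φstar) ≤
      Real.log (δ / ζ) := by
    have hA : Real.log (env (f 0) - φstar) ≤ Real.log δ := by
      apply Real.log_le_log hgap0pos
      rw [hf0]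
      have := envle π hπ
      linarith
    have hB : Real.log ζ ≤ Real.log (env (f M) - φstar) :=
      Real.log_le_log hζ hgapMpos
    rw [Real.log_div (ne_of_gt hδ) (ne_of_gt hζ)]
    linarith
  have hnorm : ‖π - f N‖ ≤ C * (1 + t) * Real.log (δ / ζ) + t * (2 * C) := by
    rw [hf0, dist_eq_norm] at h1
    rw [hM]
    have h4 : C * (1 + t) * Real.log (env (f 0) - φstar)
        - C * (1 + t) * Real.log (env (f M) - φstar) ≤ C * (1 + t) * Real.log (δ / ζ) := by
      have := mul_le_mul_of_nonneg_left hlogdiff (show (0:ℝ) ≤ C * (1 + t) by positivity)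
      linarith [this]
    linarith
  have hmemS : f N ∈ {π' ∈ Pi | env π' - φstar < ζ} := ⟨hmem N, hNspec⟩
  have hfinal : Metric.infDist π {π' ∈ Pi | env π' - φstar < ζ} ≤ ‖π - f N‖ := by
    have h := Metric.infDist_le_dist_of_mem (x := π) hmemS
    rwa [dist_eq_norm] at h
  have heq : C * (1 + t) * Real.log (δ / ζ) + t * (2 * C)
      = C * Real.log (δ / ζ) + t * (C * Real.log (δ / ζ) + 2 * C) := by ring
  linarith
end
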